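/- arXiv:1805.03100 — 2 statements merged into one kernel-verified Lean document; each statement's English description precedes it below -/
import Mathlib

section
/- Let ε ∈ (0, 1/2) and let X, Y₁, …, Y_m be independent discrete random variables of finite entropy such that H(X + Y_i) ≤ (1 + Cε)·H(X) for each i = 1, …, m, for some constant C > 0. Then H(X + Y₁ + ⋯ + Y_m) ≤ (1 + m·C·ε)·H(X). -/
/-!
Everything is done with probability mass functions valued in `ℝ≥0∞`, so that entropies are
always defined (possibly `∞`) and no summability has to be tracked. For independent `X, Y, Z` the
Kaimanovich–Vershik inequality `H(X + Y + Z) + H(X) ≤ H(X + Y) + H(X + Z)` is Gibbs' inequality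
for the joint law of `(Y, Z, X + Y + Z)` against the law that makes `Y` and `Z` conditionally
independent given `X + Y + Z`. Adding the `Yᵢ` one at a time then gives
`H(X + ∑ Yᵢ) + m H(X) ≤ ∑ H(X + Yᵢ) + H(X)`. If some `H(X + Yᵢ)` is infinite, so is
`H(X + ∑ Yᵢ)`, because entropy does not decrease under independent addition, and then `ent`,
being a non-summable `tsum`, takes the junk value `0`.
-/

open MeasureTheory ProbabilityTheory

/-- Shannon entropy (base 2) of a real-valued random variable. -/
noncomputable def ent {Ω : Type*} [MeasurableSpace Ω] (μ : Measure Ω) (X : Ω → ℝ) : ℝ :=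
  ∑' x : ℝ, -((μ (X ⁻¹' {x})).toReal * Real.logb 2 (μ (X ⁻¹' {x})).toReal)

/-- `X` is a discrete (countably-valued) measurable random variable of finite entropy. -/
def DiscreteFinEnt {Ω : Type*} [MeasurableSpace Ω] (μ : Measure Ω) (X : Ω → ℝ) : Prop :=
  Measurable X ∧ Set.Countable (Set.range X) ∧
    Summable (fun x : ℝ => -((μ (X ⁻¹' {x})).toReal * Real.logb 2 (μ (X ⁻¹' {x})).toReal))

open scoped ENNReal

/-- Meant for `0 < x ≤ 1`; the junk value `surprisal 0 = 0` only ever appears multiplied by a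
zero mass. -/
noncomputable def surprisal (x : ℝ≥0∞) : ℝ≥0∞ := ENNReal.ofReal (-Real.logb 2 x.toReal)

noncomputable def entropy {α : Type*} (f : α → ℝ≥0∞) : ℝ≥0∞ := ∑' a, f a * surprisal (f a)

section Surprisal

variable {u v : ℝ≥0∞}

lemma neg_logb_toReal_nonneg (hu : u ≤ 1) : 0 ≤ -Real.logb 2 u.toReal :=
  neg_nonneg.2 <| Real.logb_nonpos one_lt_two ENNReal.toReal_nonneg <|
    ENNReal.toReal_le_of_le_ofReal zero_le_one (by simpa using hu)

lemma surprisal_mul (hu0 : u ≠ 0) (hv0 : v ≠ 0) (hu : u ≤ 1) (hv : v ≤ 1) :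
    surprisal (u * v) = surprisal u + surprisal v := by
  have hu' := ENNReal.toReal_pos hu0 (ne_top_of_le_ne_top ENNReal.one_ne_top hu)
  have hv' := ENNReal.toReal_pos hv0 (ne_top_of_le_ne_top ENNReal.one_ne_top hv)
  rw [surprisal, ENNReal.toReal_mul, Real.logb_mul hu'.ne' hv'.ne', neg_add,
    ENNReal.ofReal_add (neg_logb_toReal_nonneg hu) (neg_logb_toReal_nonneg hv), surprisal,
    surprisal]

lemma surprisal_add_surprisal_eq {u₁ u₂ v₁ v₂ : ℝ≥0∞} (h : u₁ * u₂ = v₁ * v₂)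
    (hu₁ : u₁ ≠ 0) (hu₂ : u₂ ≠ 0) (hv₁ : v₁ ≠ 0) (hv₂ : v₂ ≠ 0)
    (hu₁' : u₁ ≤ 1) (hu₂' : u₂ ≤ 1) (hv₁' : v₁ ≤ 1) (hv₂' : v₂ ≤ 1) :
    surprisal u₁ + surprisal u₂ = surprisal v₁ + surprisal v₂ := by
  rw [← surprisal_mul hu₁ hu₂ hu₁' hu₂', h, surprisal_mul hv₁ hv₂ hv₁' hv₂']

lemma surprisal_le_surprisal (hu : u ≠ 0) (huv : u ≤ v) (hv : v ≠ ∞) :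
    surprisal v ≤ surprisal u := by
  have hu' := ENNReal.toReal_pos hu (ne_top_of_le_ne_top hv huv)
  refine ENNReal.ofReal_le_ofReal (neg_le_neg ?_)
  exact Real.logb_le_logb_of_le one_lt_two hu' (ENNReal.toReal_mono hv huv)

lemma mul_surprisal_mul (hu : u ≤ 1) (hv : v ≤ 1) :
    u * v * surprisal (u * v) = u * (v * surprisal v) + v * (u * surprisal u) := by
  rcases eq_or_ne u 0 with rfl | hu0
  · simp
  rcases eq_or_ne v 0 with rfl | hv0
  · simp
  rw [surprisal_mul hu0 hv0 hu hv]
  ring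

/-- The pointwise form of Gibbs' inequality, `u log (v/u) ≤ (v - u) / log 2`, arranged so that
both sides are sums of nonnegative terms. -/
lemma mul_surprisal_add_le (hu : u ≤ 1) (hv : v ≤ 1) (huv : u ≠ 0 → v ≠ 0) :
    u * surprisal u + u * ENNReal.ofReal (Real.log 2)⁻¹ ≤
      u * surprisal v + v * ENNReal.ofReal (Real.log 2)⁻¹ := by
  rcases eq_or_ne u 0 with rfl | hu0
  · simp
  have hut := ne_top_of_le_ne_top ENNReal.one_ne_top hu
  have hvt := ne_top_of_le_ne_top ENNReal.one_ne_top hv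
  have hU := ENNReal.toReal_pos hu0 hut
  have hV := ENNReal.toReal_pos (huv hu0) hvt
  have hmul : ∀ w : ℝ≥0∞, w ≠ ∞ → ∀ x, w * ENNReal.ofReal x = ENNReal.ofReal (w.toReal * x) :=
    fun w hw x => by rw [ENNReal.ofReal_mul ENNReal.toReal_nonneg, ENNReal.ofReal_toReal hw]
  have hgibbs : u.toReal * (Real.log v.toReal - Real.log u.toReal) ≤ v.toReal - u.toReal := by
    have h := mul_le_mul_of_nonneg_left (Real.log_le_sub_one_of_pos (div_pos hV hU)) hU.le
    rwa [Real.log_div hV.ne' hU.ne', mul_sub_one, mul_div_cancel₀ _ hU.ne'] at h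
  have hκ : 0 ≤ (Real.log 2)⁻¹ := inv_nonneg.2 (Real.log_nonneg one_le_two)
  simp only [surprisal, hmul u hut, hmul v hvt]
  rw [← ENNReal.ofReal_add (mul_nonneg hU.le (neg_logb_toReal_nonneg hu)) (mul_nonneg hU.le hκ),
    ← ENNReal.ofReal_add (mul_nonneg hU.le (neg_logb_toReal_nonneg hv)) (mul_nonneg hV.le hκ)]
  refine ENNReal.ofReal_le_ofReal (sub_nonpos.1 ?_)
  have : u.toReal * -Real.logb 2 u.toReal + u.toReal * (Real.log 2)⁻¹ -
      (u.toReal * -Real.logb 2 v.toReal + v.toReal * (Real.log 2)⁻¹) =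
      (u.toReal * (Real.log v.toReal - Real.log u.toReal) - (v.toReal - u.toReal)) *
        (Real.log 2)⁻¹ := by
    simp only [Real.logb]; ring
  rw [this]
  exact mul_nonpos_of_nonpos_of_nonneg (by linarith) hκ

end Surprisal

section Entropy

variable {α β : Type*}

lemma le_one_of_tsum_eq_one {f : α → ℝ≥0∞} (hf : ∑' a, f a = 1) (a : α) : f a ≤ 1 :=
  hf ▸ ENNReal.le_tsum a

lemma tsum_mul_eq_one {f : α → ℝ≥0∞} {g : β → ℝ≥0∞} (hf : ∑' a, f a = 1)
    (hg : ∑' b, g b = 1) : ∑' x : α × β, f x.1 * g x.2 = 1 := by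
  simp only [ENNReal.tsum_prod', ENNReal.tsum_mul_left, hg, mul_one, hf]

lemma entropy_comp_equiv (f : β → ℝ≥0∞) (e : α ≃ β) : entropy (f ∘ e) = entropy f :=
  e.tsum_eq fun b => f b * surprisal (f b)

lemma entropy_mul {f : α → ℝ≥0∞} {g : β → ℝ≥0∞} (hf : ∑' a, f a = 1) (hg : ∑' b, g b = 1) :
    entropy (fun x : α × β => f x.1 * g x.2) = entropy f + entropy g := by
  simp only [entropy, ENNReal.tsum_prod', mul_surprisal_mul (le_one_of_tsum_eq_one hf _)
    (le_one_of_tsum_eq_one hg _), ENNReal.tsum_add, ENNReal.tsum_mul_left, ENNReal.tsum_mul_right,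
    hf, hg, one_mul, add_comm]

theorem entropy_le_tsum_mul_surprisal {f g : α → ℝ≥0∞} (hf : ∑' a, f a = 1)
    (hg : ∑' a, g a ≤ 1) (hfg : ∀ a, f a ≠ 0 → g a ≠ 0) :
    entropy f ≤ ∑' a, f a * surprisal (g a) := by
  have key := ENNReal.tsum_le_tsum fun a => mul_surprisal_add_le (le_one_of_tsum_eq_one hf a)
    ((ENNReal.le_tsum a).trans hg) (hfg a)
  rw [ENNReal.tsum_add, ENNReal.tsum_add, ENNReal.tsum_mul_right, ENNReal.tsum_mul_right, hf,
    one_mul] at key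
  exact (ENNReal.add_le_add_iff_right ENNReal.ofReal_ne_top).1
    (key.trans (add_le_add_right (mul_le_of_le_one_left' hg) _))

end Entropy

section Convolution

variable {G : Type*} [AddCommGroup G] {f g : G → ℝ≥0∞}

noncomputable def conv (f g : G → ℝ≥0∞) (s : G) : ℝ≥0∞ := ∑' x, f x * g (s - x)

lemma tsum_comp_sub_right (f : G → ℝ≥0∞) (c : G) : ∑' s, f (s - c) = ∑' s, f s :=
  (Equiv.subRight c).tsum_eq f

lemma conv_ne_zero {s : G} (x : G) (hf : f x ≠ 0) (hg : g (s - x) ≠ 0) : conv f g s ≠ 0 :=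
  ((pos_iff_ne_zero.2 (mul_ne_zero hf hg)).trans_le (ENNReal.le_tsum x)).ne'

lemma conv_comm (f g : G → ℝ≥0∞) : conv f g = conv g f := by
  ext s
  rw [conv, conv, ← (Equiv.subLeft s).tsum_eq]
  simp [mul_comm]

lemma conv_assoc (f g h : G → ℝ≥0∞) : conv (conv f g) h = conv f (conv g h) := by
  ext s
  simp only [conv, ← ENNReal.tsum_mul_right, ← ENNReal.tsum_mul_left]
  rw [ENNReal.tsum_comm]
  refine tsum_congr fun x => ?_
  rw [← (Equiv.addRight x).tsum_eq]
  refine tsum_congr fun y => ?_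
  simp [sub_sub, mul_assoc, add_comm]

lemma tsum_conv_eq_one (hf : ∑' x, f x = 1) (hg : ∑' x, g x = 1) : ∑' s, conv f g s = 1 := by
  simp only [conv]
  rw [ENNReal.tsum_comm]
  simp only [ENNReal.tsum_mul_left, tsum_comp_sub_right, hg, mul_one, hf]

lemma entropy_mul_comp_sub {α : Type*} (φ : α → G) {f : α → ℝ≥0∞} (hf : ∑' a, f a = 1)
    (hg : ∑' x, g x = 1) :
    entropy (fun t : α × G => f t.1 * g (t.2 - φ t.1)) = entropy f + entropy g := by
  rw [← entropy_mul hf hg, ← entropy_comp_equiv _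
    (Equiv.prodShear (Equiv.refl α) fun a => Equiv.addRight (φ a))]
  congr 1
  ext t
  simp

lemma entropy_conv_le (hf : ∑' x, f x = 1) (hg : ∑' x, g x = 1) :
    entropy (conv f g) ≤ entropy f + entropy g := by
  have hc := le_one_of_tsum_eq_one (tsum_conv_eq_one hf hg)
  calc entropy (conv f g) = ∑' s, ∑' x, f x * g (s - x) * surprisal (conv f g s) := by
        simp only [entropy, conv, ENNReal.tsum_mul_right]
    _ ≤ ∑' s, ∑' x, f x * g (s - x) * surprisal (f x * g (s - x)) := by
        refine ENNReal.tsum_le_tsum fun s => ENNReal.tsum_le_tsum fun x => ?_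
        rcases eq_or_ne (f x * g (s - x)) 0 with h | h
        · simp [h]
        · exact mul_le_mul_right (surprisal_le_surprisal h (ENNReal.le_tsum x)
            (ne_top_of_le_ne_top ENNReal.one_ne_top (hc s))) _
    _ = entropy (fun t : G × G => f t.1 * g (t.2 - t.1)) := by
        rw [entropy, ENNReal.tsum_prod', ENNReal.tsum_comm]
    _ = entropy f + entropy g := entropy_mul_comp_sub id hf hg

lemma entropy_le_entropy_conv (hf : ∑' x, f x = 1) (hg : ∑' x, g x = 1) :
    entropy f ≤ entropy (conv f g) := by
  have hc := tsum_conv_eq_one hf hg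
  have key : ∀ z, g z ≠ 0 → entropy f ≤ ∑' s, f (s - z) * surprisal (conv f g s) := by
    intro z hz
    have hsupp : ∀ s, f (s - z) ≠ 0 → conv f g s ≠ 0 := fun s hs =>
      conv_ne_zero (s - z) hs (by rwa [sub_sub_cancel])
    calc entropy f = entropy (fun s => f (s - z)) :=
          (tsum_comp_sub_right (fun s => f s * surprisal (f s)) z).symm
      _ ≤ _ := entropy_le_tsum_mul_surprisal (by rwa [tsum_comp_sub_right]) hc.le hsupp
  calc entropy f = ∑' z, g z * entropy f := by rw [ENNReal.tsum_mul_right, hg, one_mul]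
    _ ≤ ∑' z, g z * ∑' s, f (s - z) * surprisal (conv f g s) := ENNReal.tsum_le_tsum fun z => by
        rcases eq_or_ne (g z) 0 with h | h
        · simp [h]
        · exact mul_le_mul_right (key z h) _
    _ = entropy (conv f g) := by
        simp only [← ENNReal.tsum_mul_left, ← mul_assoc]
        rw [ENNReal.tsum_comm, entropy]
        refine tsum_congr fun s => ?_
        rw [conv_comm, conv, ENNReal.tsum_mul_right]

/-- The law of `(Y, Z, X + Y + Z)` for independent `X, Y, Z` with laws `p, q, r`. -/
noncomputable def tripleLaw (p q r : G → ℝ≥0∞) (t : (G × G) × G) : ℝ≥0∞ :=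
  q t.1.1 * r t.1.2 * p (t.2 - (t.1.1 + t.1.2))

/-- The law with the same marginals on `(Y, X + Y + Z)` and on `(Z, X + Y + Z)` as `tripleLaw`,
under which `Y` and `Z` are conditionally independent given `X + Y + Z`. -/
noncomputable def condIndepLaw (p q r : G → ℝ≥0∞) (t : (G × G) × G) : ℝ≥0∞ :=
  q t.1.1 * conv p r (t.2 - t.1.1) * (r t.1.2 * conv p q (t.2 - t.1.2)) / conv (conv p q) r t.2

variable {p q r : G → ℝ≥0∞}

lemma tsum_tripleLaw_right (p q r : G → ℝ≥0∞) (y s : G) :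
    ∑' z, tripleLaw p q r ((y, z), s) = q y * conv p r (s - y) := by
  rw [conv_comm, conv, ← ENNReal.tsum_mul_left]
  refine tsum_congr fun z => ?_
  rw [tripleLaw, sub_sub, mul_assoc]

lemma tsum_tripleLaw_left (p q r : G → ℝ≥0∞) (z s : G) :
    ∑' y, tripleLaw p q r ((y, z), s) = r z * conv p q (s - z) := by
  rw [conv_comm, conv, ← ENNReal.tsum_mul_left]
  refine tsum_congr fun y => ?_
  rw [tripleLaw, sub_sub, add_comm z]
  ring

lemma tsum_tsum_tripleLaw (p q r : G → ℝ≥0∞) (s : G) :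
    ∑' y, ∑' z, tripleLaw p q r ((y, z), s) = conv (conv p q) r s := by
  rw [ENNReal.tsum_comm, conv_comm, conv]
  exact tsum_congr fun z => tsum_tripleLaw_left p q r z s

lemma tsum_tripleLaw (hp : ∑' x, p x = 1) (hq : ∑' x, q x = 1) (hr : ∑' x, r x = 1) :
    ∑' t, tripleLaw p q r t = 1 := by
  rw [ENNReal.tsum_prod', ENNReal.tsum_comm, ← tsum_conv_eq_one (tsum_conv_eq_one hp hq) hr]
  exact tsum_congr fun s => ENNReal.tsum_prod'.trans (tsum_tsum_tripleLaw p q r s)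

lemma entropy_tripleLaw (hp : ∑' x, p x = 1) (hq : ∑' x, q x = 1) (hr : ∑' x, r x = 1) :
    entropy (tripleLaw p q r) = entropy q + entropy r + entropy p := by
  rw [← entropy_mul hq hr,
    ← entropy_mul_comp_sub (fun yz => yz.1 + yz.2) (tsum_mul_eq_one hq hr) hp]
  rfl

lemma tsum_tripleLaw_mul_surprisal_conv_conv (p q r : G → ℝ≥0∞) :
    ∑' t, tripleLaw p q r t * surprisal (conv (conv p q) r t.2) = entropy (conv (conv p q) r) := by
  rw [ENNReal.tsum_prod', ENNReal.tsum_comm, entropy]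
  refine tsum_congr fun s => ?_
  rw [ENNReal.tsum_prod']
  simp only [ENNReal.tsum_mul_right, tsum_tsum_tripleLaw]

lemma tsum_tripleLaw_mul_surprisal_left (hp : ∑' x, p x = 1) (hq : ∑' x, q x = 1)
    (hr : ∑' x, r x = 1) :
    ∑' t, tripleLaw p q r t * surprisal (q t.1.1 * conv p r (t.2 - t.1.1)) =
      entropy q + entropy (conv p r) := by
  rw [← entropy_mul_comp_sub id hq (tsum_conv_eq_one hp hr), entropy, ENNReal.tsum_prod',
    ENNReal.tsum_prod', ENNReal.tsum_prod']
  refine tsum_congr fun y => ?_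
  rw [ENNReal.tsum_comm]
  refine tsum_congr fun s => ?_
  dsimp only
  rw [ENNReal.tsum_mul_right, tsum_tripleLaw_right]
  rfl

lemma tsum_tripleLaw_mul_surprisal_right (hp : ∑' x, p x = 1) (hq : ∑' x, q x = 1)
    (hr : ∑' x, r x = 1) :
    ∑' t, tripleLaw p q r t * surprisal (r t.1.2 * conv p q (t.2 - t.1.2)) =
      entropy r + entropy (conv p q) := by
  rw [← entropy_mul_comp_sub id hr (tsum_conv_eq_one hp hq), entropy, ENNReal.tsum_prod',
    ENNReal.tsum_prod', ENNReal.tsum_prod', ENNReal.tsum_comm]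
  refine tsum_congr fun z => ?_
  rw [ENNReal.tsum_comm]
  refine tsum_congr fun s => ?_
  dsimp only
  rw [ENNReal.tsum_mul_right, tsum_tripleLaw_left]
  rfl

lemma tsum_condIndepLaw_le_one (hp : ∑' x, p x = 1) (hq : ∑' x, q x = 1)
    (hr : ∑' x, r x = 1) : ∑' t, condIndepLaw p q r t ≤ 1 := by
  rw [ENNReal.tsum_prod', ENNReal.tsum_comm, ← tsum_conv_eq_one (tsum_conv_eq_one hp hq) hr]
  refine ENNReal.tsum_le_tsum fun s => ?_
  have hq_side : ∑' y, q y * conv p r (s - y) = conv (conv p q) r s := by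
    rw [conv_comm p q, conv_assoc]
    rfl
  have hr_side : ∑' z, r z * conv p q (s - z) = conv (conv p q) r s := by
    rw [conv_comm _ r]
    rfl
  simp only [condIndepLaw, ENNReal.tsum_prod', div_eq_mul_inv, ENNReal.tsum_mul_right,
    ENNReal.tsum_mul_left, hq_side, hr_side]
  rw [mul_assoc, ← div_eq_mul_inv]
  exact ENNReal.mul_div_le

lemma ne_zero_of_tripleLaw_ne_zero {t : (G × G) × G} (ht : tripleLaw p q r t ≠ 0) :
    q t.1.1 * conv p r (t.2 - t.1.1) ≠ 0 ∧ r t.1.2 * conv p q (t.2 - t.1.2) ≠ 0 ∧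
      conv (conv p q) r t.2 ≠ 0 := by
  obtain ⟨⟨y, z⟩, s⟩ := t
  simp only [tripleLaw, ne_eq, mul_eq_zero, not_or] at ht
  obtain ⟨⟨hqy, hrz⟩, hpx⟩ := ht
  have hb : conv p r (s - y) ≠ 0 :=
    conv_ne_zero _ hpx (by rwa [sub_sub_sub_cancel_left, add_sub_cancel_left])
  have ha : conv p q (s - z) ≠ 0 :=
    conv_ne_zero _ hpx (by rwa [sub_sub_sub_cancel_left, add_sub_cancel_right])
  exact ⟨mul_ne_zero hqy hb, mul_ne_zero hrz ha, conv_ne_zero _ ha (by rwa [sub_sub_cancel])⟩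

lemma condIndepLaw_ne_zero (hp : ∑' x, p x = 1) (hq : ∑' x, q x = 1) (hr : ∑' x, r x = 1)
    {t : (G × G) × G} (ht : tripleLaw p q r t ≠ 0) : condIndepLaw p q r t ≠ 0 := by
  obtain ⟨hU, hV, -⟩ := ne_zero_of_tripleLaw_ne_zero ht
  exact ENNReal.div_ne_zero.2 ⟨mul_ne_zero hU hV, ne_top_of_le_ne_top ENNReal.one_ne_top
    (le_one_of_tsum_eq_one (tsum_conv_eq_one (tsum_conv_eq_one hp hq) hr) _)⟩

lemma surprisal_condIndepLaw_add (hp : ∑' x, p x = 1) (hq : ∑' x, q x = 1)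
    (hr : ∑' x, r x = 1) {t : (G × G) × G} (ht : tripleLaw p q r t ≠ 0) :
    surprisal (condIndepLaw p q r t) + surprisal (conv (conv p q) r t.2) =
      surprisal (q t.1.1 * conv p r (t.2 - t.1.1)) +
        surprisal (r t.1.2 * conv p q (t.2 - t.1.2)) := by
  obtain ⟨hU, hV, hc⟩ := ne_zero_of_tripleLaw_ne_zero ht
  have hc1 := le_one_of_tsum_eq_one (tsum_conv_eq_one (tsum_conv_eq_one hp hq) hr)
  have hmul_le_one : ∀ {u v : G → ℝ≥0∞}, ∑' x, u x = 1 → ∑' x, v x = 1 → ∀ x y, u x * v y ≤ 1 :=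
    fun hu hv x y => mul_le_one' (le_one_of_tsum_eq_one hu x) (le_one_of_tsum_eq_one hv y)
  exact surprisal_add_surprisal_eq
    (ENNReal.div_mul_cancel hc (ne_top_of_le_ne_top ENNReal.one_ne_top (hc1 _)))
    (condIndepLaw_ne_zero hp hq hr ht) hc hU hV
    ((ENNReal.le_tsum t).trans (tsum_condIndepLaw_le_one hp hq hr)) (hc1 _)
    (hmul_le_one hq (tsum_conv_eq_one hp hr) _ _) (hmul_le_one hr (tsum_conv_eq_one hp hq) _ _)

theorem entropy_conv_conv_add_le (hp : ∑' x, p x = 1) (hq : ∑' x, q x = 1)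
    (hr : ∑' x, r x = 1) (hHq : entropy q ≠ ∞) (hHr : entropy r ≠ ∞) :
    entropy (conv (conv p q) r) + entropy p ≤ entropy (conv p q) + entropy (conv p r) := by
  set w := tripleLaw p q r
  set c := conv (conv p q) r
  have hsplit : ∀ t, w t * surprisal (condIndepLaw p q r t) + w t * surprisal (c t.2) =
      w t * surprisal (q t.1.1 * conv p r (t.2 - t.1.1)) +
        w t * surprisal (r t.1.2 * conv p q (t.2 - t.1.2)) := fun t => by
    rcases eq_or_ne (w t) 0 with hwt | hwt
    · simp [hwt]
    · rw [← mul_add, ← mul_add, surprisal_condIndepLaw_add hp hq hr hwt]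
  have key : entropy q + entropy r + (entropy c + entropy p) ≤
      entropy q + entropy r + (entropy (conv p q) + entropy (conv p r)) :=
    calc entropy q + entropy r + (entropy c + entropy p) = entropy w + entropy c := by
          rw [entropy_tripleLaw hp hq hr]; ring
      _ ≤ ∑' t, w t * surprisal (condIndepLaw p q r t) + ∑' t, w t * surprisal (c t.2) := by
          rw [tsum_tripleLaw_mul_surprisal_conv_conv]
          gcongr
          exact entropy_le_tsum_mul_surprisal (tsum_tripleLaw hp hq hr)
            (tsum_condIndepLaw_le_one hp hq hr) fun t => condIndepLaw_ne_zero hp hq hr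
      _ = entropy q + entropy r + (entropy (conv p q) + entropy (conv p r)) := by
          rw [← ENNReal.tsum_add, tsum_congr hsplit, ENNReal.tsum_add,
            tsum_tripleLaw_mul_surprisal_left hp hq hr, tsum_tripleLaw_mul_surprisal_right hp hq hr]
          ring
  exact (ENNReal.add_le_add_iff_left (ENNReal.add_ne_top.2 ⟨hHq, hHr⟩)).1 key

end Convolution

section ProbMass

variable {Ω G : Type*} [MeasurableSpace Ω] {μ : Measure Ω}

def probMass (μ : Measure Ω) (X : Ω → G) (x : G) : ℝ≥0∞ := μ (X ⁻¹' {x})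

lemma probMass_eq_zero_of_notMem_range {X : Ω → G} {x : G} (hx : x ∉ Set.range X) :
    probMass μ X x = 0 := by
  simp [probMass, Set.preimage_singleton_eq_empty.2 hx]

lemma probMass_le_one [IsProbabilityMeasure μ] (X : Ω → G) (x : G) : probMass μ X x ≤ 1 :=
  prob_le_one

lemma entropy_probMass_const [IsProbabilityMeasure μ] (c : G) :
    entropy (probMass μ (fun _ => c)) = 0 := by
  refine ENNReal.tsum_eq_zero.2 fun x => ?_
  by_cases hx : c = x
  · simp [probMass, hx, surprisal]
  · simp [probMass, hx]

variable [MeasurableSpace G] [MeasurableSingletonClass G]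

lemma tsum_probMass [IsProbabilityMeasure μ] {X : Ω → G} (hX : Measurable X)
    (hc : (Set.range X).Countable) : ∑' x, probMass μ X x = 1 := by
  rw [← tsum_subtype_eq_of_support_subset (s := Set.range X) fun x hx =>
      by_contra fun h => hx (probMass_eq_zero_of_notMem_range h)]
  exact (tsum_measure_preimage_singleton hc fun x _ => hX (measurableSet_singleton x)).trans
    (by rw [Set.preimage_range, measure_univ])

lemma probMass_add [AddCommGroup G] {X Y : Ω → G} (hX : Measurable X)
    (hc : (Set.range X).Countable) (hXY : IndepFun X Y μ) :
    probMass μ (X + Y) = conv (probMass μ X) (probMass μ Y) := by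
  ext s
  set E := (X + Y) ⁻¹' {s}
  have hfiber : ∀ x, probMass μ X x * probMass μ Y (s - x) = μ.restrict E (X ⁻¹' {x}) := by
    intro x
    rw [probMass, probMass, ← hXY.measure_inter_preimage_eq_mul _ _ (measurableSet_singleton _)
      (measurableSet_singleton _), Measure.restrict_apply (hX (measurableSet_singleton x))]
    congr 1
    ext ω
    simp +contextual [E, eq_sub_iff_add_eq']
  rw [conv, tsum_congr hfiber, ← tsum_subtype_eq_of_support_subset (s := Set.range X) fun x hx =>
      by_contra fun h => hx (by simp [Set.preimage_singleton_eq_empty.2 h]),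
    tsum_measure_preimage_singleton hc fun x _ => hX (measurableSet_singleton x),
    Set.preimage_range, Measure.restrict_apply_univ]
  rfl

end ProbMass

section Bridge

variable {Ω : Type*} [MeasurableSpace Ω] {μ : Measure Ω} [IsProbabilityMeasure μ]

lemma probMass_mul_surprisal (X : Ω → ℝ) (x : ℝ) :
    probMass μ X x * surprisal (probMass μ X x) =
      ENNReal.ofReal (-((μ (X ⁻¹' {x})).toReal * Real.logb 2 (μ (X ⁻¹' {x})).toReal)) := by
  rw [neg_mul_eq_mul_neg, ENNReal.ofReal_mul ENNReal.toReal_nonneg,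
    ENNReal.ofReal_toReal (measure_ne_top μ _)]
  rfl

lemma ent_eq_toReal_entropy (X : Ω → ℝ) : ent μ X = (entropy (probMass μ X)).toReal := by
  rw [entropy, tsum_congr (probMass_mul_surprisal X),
    ENNReal.tsum_toReal_eq fun _ => ENNReal.ofReal_ne_top, ent]
  refine tsum_congr fun x => (ENNReal.toReal_ofReal ?_).symm
  rw [neg_mul_eq_mul_neg]
  exact mul_nonneg ENNReal.toReal_nonneg (neg_logb_toReal_nonneg (probMass_le_one X x))

lemma ent_nonneg (X : Ω → ℝ) : 0 ≤ ent μ X :=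
  (ent_eq_toReal_entropy (μ := μ) X).symm ▸ ENNReal.toReal_nonneg

lemma DiscreteFinEnt.entropy_ne_top {X : Ω → ℝ} (hX : DiscreteFinEnt μ X) :
    entropy (probMass μ X) ≠ ∞ := by
  rw [entropy, tsum_congr (probMass_mul_surprisal X), ← ENNReal.ofReal_tsum_of_nonneg _ hX.2.2]
  · exact ENNReal.ofReal_ne_top
  · intro x
    rw [neg_mul_eq_mul_neg]
    exact mul_nonneg ENNReal.toReal_nonneg (neg_logb_toReal_nonneg (probMass_le_one X x))

end Bridge

section IndependentSums

open Finset

variable {ι Ω G : Type*}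

lemma countable_range_add [Add G] {f g : Ω → G} (hf : (Set.range f).Countable)
    (hg : (Set.range g).Countable) : (Set.range (f + g)).Countable := by
  refine (hf.image2 hg (· + ·)).mono ?_
  rintro _ ⟨ω, rfl⟩
  exact Set.mem_image2_of_mem (Set.mem_range_self ω) (Set.mem_range_self ω)

lemma countable_range_finsetSum [AddCommMonoid G] [DecidableEq ι] {F : ι → Ω → G}
    (hFc : ∀ i, (Set.range (F i)).Countable) (A : Finset ι) :
    (Set.range (∑ i ∈ A, F i)).Countable := by
  induction A using Finset.induction_on with
  | empty => exact (Set.countable_singleton 0).mono (Set.range_subset_iff.2 fun _ => rfl)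
  | insert a A ha ih => rw [sum_insert ha]; exact countable_range_add (hFc a) ih

variable [MeasurableSpace Ω] {μ : Measure Ω}

lemma ProbabilityTheory.iIndepFun.indepFun_finsetSum_finsetSum [AddCommMonoid G] [MeasurableSpace G]
    [MeasurableAdd₂ G] [IsProbabilityMeasure μ] {F : ι → Ω → G} (hF : iIndepFun F μ)
    (hFm : ∀ i, Measurable (F i)) {S T : Finset ι} (hST : Disjoint S T) :
    IndepFun (∑ i ∈ S, F i) (∑ i ∈ T, F i) μ := by
  have hsum : ∀ U : Finset ι, Measurable fun v : U → G => ∑ i, v i := fun U =>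
    Finset.measurable_sum _ fun i _ => measurable_pi_apply i
  convert (hF.indepFun_finset S T hST hFm).comp (hsum S) (hsum T) using 1 <;>
    ext ω <;> simp only [Finset.sum_apply, Function.comp_apply, Finset.univ_eq_attach] <;>
    exact (Finset.sum_attach _ fun i => F i ω).symm

variable [AddCommGroup G] [MeasurableSpace G] [MeasurableSingletonClass G] [MeasurableAdd₂ G]
  [IsProbabilityMeasure μ] [DecidableEq ι] {F : ι → Ω → G}

lemma tsum_probMass_finsetSum (hFm : ∀ i, Measurable (F i))
    (hFc : ∀ i, (Set.range (F i)).Countable) (A : Finset ι) :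
    ∑' x, probMass μ (∑ i ∈ A, F i) x = 1 :=
  tsum_probMass (by fun_prop) (countable_range_finsetSum hFc A)

lemma entropy_probMass_finsetSum_ne_top (hF : iIndepFun F μ) (hFm : ∀ i, Measurable (F i))
    (hFc : ∀ i, (Set.range (F i)).Countable) (hFH : ∀ i, entropy (probMass μ (F i)) ≠ ∞)
    (A : Finset ι) : entropy (probMass μ (∑ i ∈ A, F i)) ≠ ∞ := by
  induction A using Finset.induction_on with
  | empty =>
    rw [sum_empty, show (0 : Ω → G) = fun _ => 0 from rfl, entropy_probMass_const]
    exact ENNReal.zero_ne_top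
  | insert a A ha ih =>
    rw [sum_insert ha, probMass_add (hFm a) (hFc a) (hF.indepFun_finsetSum_of_notMem hFm ha).symm]
    exact ne_top_of_le_ne_top (ENNReal.add_ne_top.2 ⟨hFH a, ih⟩)
      (entropy_conv_le (tsum_probMass (hFm a) (hFc a)) (tsum_probMass_finsetSum hFm hFc A))

theorem entropy_probMass_add_finsetSum_add_card_mul_le (hF : iIndepFun F μ)
    (hFm : ∀ i, Measurable (F i)) (hFc : ∀ i, (Set.range (F i)).Countable)
    (hFH : ∀ i, entropy (probMass μ (F i)) ≠ ∞) {i₀ : ι} {A : Finset ι} (hA : i₀ ∉ A) :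
    entropy (probMass μ (F i₀ + ∑ i ∈ A, F i)) + #A * entropy (probMass μ (F i₀)) ≤
      ∑ i ∈ A, entropy (probMass μ (F i₀ + F i)) + entropy (probMass μ (F i₀)) := by
  induction A using Finset.induction_on with
  | empty => simp
  | insert a A ha ih =>
    rw [mem_insert, not_or] at hA
    set p := probMass μ (F i₀)
    set q := probMass μ (∑ i ∈ A, F i)
    set r := probMass μ (F a)
    have hpq : probMass μ (F i₀ + ∑ i ∈ A, F i) = conv p q :=
      probMass_add (hFm i₀) (hFc i₀) (hF.indepFun_finsetSum_of_notMem hFm hA.2).symm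
    have hpr : probMass μ (F i₀ + F a) = conv p r :=
      probMass_add (hFm i₀) (hFc i₀) (hF.indepFun hA.1)
    have hpqr : probMass μ (F i₀ + ∑ i ∈ insert a A, F i) = conv (conv p q) r := by
      have hindep : IndepFun (F a) (F i₀ + ∑ i ∈ A, F i) μ := by
        rw [← sum_insert hA.2]
        exact (hF.indepFun_finsetSum_of_notMem hFm (by simp [ha, Ne.symm hA.1])).symm
      rw [sum_insert ha, add_left_comm, probMass_add (hFm a) (hFc a) hindep, hpq, conv_comm]
    have hsub := entropy_conv_conv_add_le (tsum_probMass (μ := μ) (hFm i₀) (hFc i₀))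
      (tsum_probMass_finsetSum hFm hFc A) (tsum_probMass (hFm a) (hFc a))
      (entropy_probMass_finsetSum_ne_top hF hFm hFc hFH A) (hFH a)
    rw [hpq] at ih
    rw [hpqr, card_insert_of_notMem ha, sum_insert ha, hpr, Nat.cast_succ]
    calc entropy (conv (conv p q) r) + (#A + 1) * entropy p
        = (entropy (conv (conv p q) r) + entropy p) + #A * entropy p := by ring
      _ ≤ (entropy (conv p q) + entropy (conv p r)) + #A * entropy p := by gcongr
      _ = entropy (conv p r) + (entropy (conv p q) + #A * entropy p) := by ring
      _ ≤ entropy (conv p r) + (∑ i ∈ A, entropy (probMass μ (F i₀ + F i)) + entropy p) :=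
        add_le_add_right (ih hA.2) _
      _ = _ := by ring

lemma entropy_probMass_add_le_of_mem (hF : iIndepFun F μ) (hFm : ∀ i, Measurable (F i))
    (hFc : ∀ i, (Set.range (F i)).Countable) {i₀ a : ι} {A : Finset ι} (hA : i₀ ∉ A)
    (ha : a ∈ A) :
    entropy (probMass μ (F i₀ + F a)) ≤ entropy (probMass μ (F i₀ + ∑ i ∈ A, F i)) := by
  have hindep : IndepFun (F i₀ + F a) (∑ i ∈ A.erase a, F i) μ := by
    rw [← sum_pair (ne_of_mem_of_not_mem ha hA).symm]
    exact hF.indepFun_finsetSum_finsetSum hFm (by simp [hA])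
  rw [← add_sum_erase A F ha, ← add_assoc, probMass_add ((hFm i₀).add (hFm a))
    (countable_range_add (hFc i₀) (hFc a)) hindep]
  exact entropy_le_entropy_conv (tsum_probMass ((hFm i₀).add (hFm a))
    (countable_range_add (hFc i₀) (hFc a))) (tsum_probMass_finsetSum hFm hFc _)

end IndependentSums

open Finset in
theorem ent_add_finsetSum_le {ι Ω : Type*} [MeasurableSpace Ω] {μ : Measure Ω}
    [IsProbabilityMeasure μ] [DecidableEq ι] {F : ι → Ω → ℝ} (hF : iIndepFun F μ)
    (hFd : ∀ i, DiscreteFinEnt μ (F i)) {i₀ : ι} {A : Finset ι} (hA : i₀ ∉ A) {K : ℝ}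
    (hK : ent μ (F i₀) ≤ K) (hAK : ∀ i ∈ A, ent μ (F i₀ + F i) ≤ K) :
    ent μ (F i₀ + ∑ i ∈ A, F i) ≤ ent μ (F i₀) + #A * (K - ent μ (F i₀)) := by
  have hFm i := (hFd i).1
  have hFc i := (hFd i).2.1
  have hFH i := (hFd i).entropy_ne_top
  simp only [ent_eq_toReal_entropy] at hK hAK ⊢
  by_cases htop : ∃ a ∈ A, entropy (probMass μ (F i₀ + F a)) = ∞
  · obtain ⟨a, ha, h⟩ := htop
    have hL := entropy_probMass_add_le_of_mem hF hFm hFc hA ha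
    rw [h, top_le_iff] at hL
    rw [hL, ENNReal.toReal_top]
    exact add_nonneg ENNReal.toReal_nonneg (mul_nonneg (Nat.cast_nonneg _) (sub_nonneg.2 hK))
  simp only [not_exists, not_and] at htop
  have hclaim := entropy_probMass_add_finsetSum_add_card_mul_le hF hFm hFc hFH hA
  have hR : ∑ i ∈ A, entropy (probMass μ (F i₀ + F i)) ≠ ∞ := ENNReal.sum_ne_top.2 htop
  have hL : entropy (probMass μ (F i₀ + ∑ i ∈ A, F i)) ≠ ∞ :=
    ne_top_of_le_ne_top (ENNReal.add_ne_top.2 ⟨hR, hFH i₀⟩) (le_self_add.trans hclaim)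
  have hreal := (ENNReal.toReal_le_toReal (ENNReal.add_ne_top.2 ⟨hL, ENNReal.mul_ne_top
    (ENNReal.natCast_ne_top _) (hFH i₀)⟩) (ENNReal.add_ne_top.2 ⟨hR, hFH i₀⟩)).2 hclaim
  rw [ENNReal.toReal_add hL (ENNReal.mul_ne_top (ENNReal.natCast_ne_top _) (hFH i₀)),
    ENNReal.toReal_mul, ENNReal.toReal_natCast, ENNReal.toReal_add hR (hFH i₀),
    ENNReal.toReal_sum fun i hi => htop i hi] at hreal
  have hsum := Finset.sum_le_sum hAK
  rw [sum_const, nsmul_eq_mul] at hsum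
  linarith

theorem stmt2 {Ω : Type*} [MeasurableSpace Ω] (μ : Measure Ω) [IsProbabilityMeasure μ]
    (m : ℕ) (X : Ω → ℝ) (Y : Fin m → Ω → ℝ)
    (hX : DiscreteFinEnt μ X) (hY : ∀ i, DiscreteFinEnt μ (Y i))
    (hind : iIndepFun ((Fin.cons X Y : Fin (m + 1) → Ω → ℝ)) μ)
    (ε C : ℝ) (hε : ε ∈ Set.Ioo (0 : ℝ) (1 / 2)) (hC : 0 < C)
    (hbound : ∀ i, ent μ (fun ω => X ω + Y i ω) ≤ (1 + C * ε) * ent μ X) :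
    ent μ (fun ω => X ω + ∑ i, Y i ω) ≤ (1 + (m : ℝ) * C * ε) * ent μ X := by
  set F : Fin (m + 1) → Ω → ℝ := Fin.cons X Y
  have hK : ent μ (F 0) ≤ (1 + C * ε) * ent μ X :=
    le_mul_of_one_le_left (ent_nonneg X) (le_add_of_nonneg_right (mul_pos hC hε.1).le)
  have h := ent_add_finsetSum_le hind (Fin.cases hX hY) (i₀ := 0)
    (A := Finset.univ.map (Fin.succEmb m)) (by simp) hK
    fun i hi => by obtain ⟨j, -, rfl⟩ := Finset.mem_map.1 hi; exact hbound j
  have hsum : F 0 + ∑ i ∈ Finset.univ.map (Fin.succEmb m), F i = fun ω => X ω + ∑ i, Y i ω := by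
    ext ω
    simp [F, Finset.sum_apply]
  rw [hsum, Finset.card_map, Finset.card_univ, Fintype.card_fin] at h
  convert h using 1
  simp only [F, Fin.cons_zero]
  ring
end

section
/- Let V₁, V₂, V₃ be independent discrete random variables with positive finite entropies satisfying H(V₂ + V₃) ≤ (1 + Cε)H(V₁), H(V₁ + V₃) ≤ (1 + Cε)H(V₁), and (1 − Cε)H(V₁) ≤ H(V₃) ≤ (1 + Cε)H(V₁), for ε ∈ (0, 1/2) and constant C. Then H(V₁ + V₂ + V₃) ≤ (1 + C'ε)H(V₁) for some constant C' depending only on C. -/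
open MeasureTheory ProbabilityTheory

/-!
Write `H` for entropy. The heart of the matter is the submodularity inequality
`H(V₁ + V₂ + V₃) + H(V₃) ≤ H(V₁ + V₃) + H(V₂ + V₃)` for independent `V₁, V₂, V₃`; together with
the upper bounds on `H(V₁ + V₃)`, `H(V₂ + V₃)` and the lower bound on `H(V₃)` it gives the claim
with `C' = 3C`.

Let `π(a, b, c) = p(a) q(b) r(c)` be the joint distribution and `f, g, h` the distributions of
`V₁ + V₃`, `V₂ + V₃`, `V₁ + V₂ + V₃`. Both sides of the inequality are `π`-expectations of
surprisals, of `h(a + b + c) r(c)` and of `f(a + c) g(b + c)` respectively, so by Gibbs'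
inequality it suffices that `∑ π f g / (h r) ≤ 1`. On the fibre `a + b + c = s` the factor `r(c)`
cancels and the sum factors as `(∑ₐ p(a) g(s - a)) (∑_b q(b) f(s - b)) / h(s) = h(s)`.

Masses and entropies are `ℝ≥0∞`-valued, so that fibre decompositions need no summability
bookkeeping.
-/

open scoped ENNReal

namespace DiscreteEntropy

/-- `-log₂ x` for `0 < x ≤ 1`, with the junk value `0` at `x = 0` and for `x ≥ 1`. -/
noncomputable def surprisal (x : ℝ≥0∞) : ℝ≥0∞ := ENNReal.ofReal (-Real.logb 2 x.toReal)

noncomputable def massEntropy {α : Type*} (m : α → ℝ≥0∞) : ℝ≥0∞ := ∑' x, m x * surprisal (m x)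

noncomputable def pushMass {J α : Type*} (σ : J → α) (π : J → ℝ≥0∞) (s : α) : ℝ≥0∞ :=
  ∑' j : σ ⁻¹' {s}, π j

noncomputable def jointMass {α β γ : Type*} (p : α → ℝ≥0∞) (q : β → ℝ≥0∞) (r : γ → ℝ≥0∞)
    (t : α × β × γ) : ℝ≥0∞ :=
  p t.1 * (q t.2.1 * r t.2.2)

def mass {Ω β : Type*} [MeasurableSpace Ω] (μ : Measure Ω) (X : Ω → β) (x : β) : ℝ≥0∞ :=
  μ (X ⁻¹' {x})

section Surprisal

lemma toReal_le_one {u : ℝ≥0∞} (hu : u ≤ 1) : u.toReal ≤ 1 :=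
  ENNReal.toReal_le_of_le_ofReal zero_le_one (by simpa using hu)

lemma neg_logb_toReal_nonneg {u : ℝ≥0∞} (hu : u ≤ 1) : 0 ≤ -Real.logb 2 u.toReal :=
  neg_nonneg.mpr (Real.logb_nonpos one_lt_two ENNReal.toReal_nonneg (toReal_le_one hu))

lemma toReal_surprisal {u : ℝ≥0∞} (hu : u ≤ 1) :
    (surprisal u).toReal = -Real.logb 2 u.toReal :=
  ENNReal.toReal_ofReal (neg_logb_toReal_nonneg hu)

lemma surprisal_ne_top {u : ℝ≥0∞} : surprisal u ≠ ∞ := ENNReal.ofReal_ne_top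

lemma toReal_mul_surprisal {u : ℝ≥0∞} (hu : u ≤ 1) :
    (u * surprisal u).toReal = -(u.toReal * Real.logb 2 u.toReal) := by
  rw [ENNReal.toReal_mul, toReal_surprisal hu, mul_neg]

lemma surprisal_antitone {u v : ℝ≥0∞} (hu : u ≠ 0) (huv : u ≤ v) :
    surprisal v ≤ surprisal u := by
  rcases eq_or_ne v ∞ with rfl | hv
  · simp [surprisal]
  have hu' : u ≠ ∞ := ne_top_of_le_ne_top hv huv
  refine ENNReal.ofReal_le_ofReal (neg_le_neg ?_)
  exact Real.logb_le_logb_of_le one_lt_two (ENNReal.toReal_pos hu hu')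
    ((ENNReal.toReal_le_toReal hu' hv).mpr huv)

lemma surprisal_mul {u v : ℝ≥0∞} (hu : u ≠ 0) (hu1 : u ≤ 1) (hv : v ≠ 0) (hv1 : v ≤ 1) :
    surprisal (u * v) = surprisal u + surprisal v := by
  have hu' : u ≠ ∞ := ne_top_of_le_ne_top ENNReal.one_ne_top hu1
  have hv' : v ≠ ∞ := ne_top_of_le_ne_top ENNReal.one_ne_top hv1
  rw [surprisal, ENNReal.toReal_mul, Real.logb_mul (ENNReal.toReal_pos hu hu').ne'
    (ENNReal.toReal_pos hv hv').ne', neg_add,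
    ENNReal.ofReal_add (neg_logb_toReal_nonneg hu1) (neg_logb_toReal_nonneg hv1)]
  rfl

lemma toReal_mul_surprisal_sub_le {x u v : ℝ≥0∞} (hu : u ≠ 0) (hu1 : u ≤ 1)
    (hv : v ≠ 0) (hv' : v ≠ ∞) :
    (x * surprisal u).toReal - (x * surprisal v).toReal
      ≤ ((x * (v / u)).toReal - x.toReal) / Real.log 2 := by
  have hu' : u ≠ ∞ := ne_top_of_le_ne_top ENNReal.one_ne_top hu1
  have hu0 : 0 < u.toReal := ENNReal.toReal_pos hu hu'
  have hv0 : 0 < v.toReal := ENNReal.toReal_pos hv hv'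
  have hlog2 : 0 < Real.log 2 := Real.log_pos one_lt_two
  have hsv : -Real.logb 2 v.toReal ≤ (surprisal v).toReal := by
    rw [surprisal, ENNReal.toReal_ofReal']
    exact le_max_left _ _
  have hlog : Real.log (v.toReal / u.toReal) ≤ v.toReal / u.toReal - 1 :=
    Real.log_le_sub_one_of_pos (by positivity)
  simp only [ENNReal.toReal_mul, ENNReal.toReal_div, toReal_surprisal hu1]
  calc x.toReal * -Real.logb 2 u.toReal - x.toReal * (surprisal v).toReal
      ≤ x.toReal * (Real.log (v.toReal / u.toReal) / Real.log 2) := by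
        rw [Real.log_div hv0.ne' hu0.ne', sub_div, ← Real.logb, ← Real.logb]
        nlinarith [ENNReal.toReal_nonneg (a := x)]
    _ ≤ x.toReal * ((v.toReal / u.toReal - 1) / Real.log 2) := by gcongr
    _ = (x.toReal * (v.toReal / u.toReal) - x.toReal) / Real.log 2 := by ring

end Surprisal

/-- Gibbs' inequality. -/
theorem tsum_mul_surprisal_le {J : Type*} {π L M : J → ℝ≥0∞} (hπ : ∑' j, π j ≠ ∞)
    (hL : ∀ j, π j ≠ 0 → L j ≠ 0 ∧ L j ≤ 1) (hM : ∀ j, π j ≠ 0 → M j ≠ 0 ∧ M j ≠ ∞)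
    (hLfin : ∑' j, π j * surprisal (L j) ≠ ∞) (hMfin : ∑' j, π j * surprisal (M j) ≠ ∞)
    (hratio : ∑' j, π j * (M j / L j) ≤ ∑' j, π j) :
    ∑' j, π j * surprisal (L j) ≤ ∑' j, π j * surprisal (M j) := by
  have hRfin : ∑' j, π j * (M j / L j) ≠ ∞ := ne_top_of_le_ne_top hπ hratio
  have pointwise : ∀ j, (π j * surprisal (L j)).toReal - (π j * surprisal (M j)).toReal
      ≤ ((π j * (M j / L j)).toReal - (π j).toReal) / Real.log 2 := fun j => by
    rcases eq_or_ne (π j) 0 with h0 | h0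
    · simp [h0]
    exact toReal_mul_surprisal_sub_le (hL j h0).1
      (hL j h0).2 (hM j h0).1 (hM j h0).2
  have hsum := Summable.tsum_le_tsum pointwise
    ((ENNReal.summable_toReal hLfin).sub (ENNReal.summable_toReal hMfin))
    (((ENNReal.summable_toReal hRfin).sub (ENNReal.summable_toReal hπ)).div_const _)
  rw [Summable.tsum_sub (ENNReal.summable_toReal hLfin) (ENNReal.summable_toReal hMfin),
    tsum_div_const, Summable.tsum_sub (ENNReal.summable_toReal hRfin)
      (ENNReal.summable_toReal hπ)] at hsum
  simp only [← ENNReal.tsum_toReal_eq (ENNReal.ne_top_of_tsum_ne_top hLfin),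
    ← ENNReal.tsum_toReal_eq (ENNReal.ne_top_of_tsum_ne_top hMfin),
    ← ENNReal.tsum_toReal_eq (ENNReal.ne_top_of_tsum_ne_top hRfin),
    ← ENNReal.tsum_toReal_eq (ENNReal.ne_top_of_tsum_ne_top hπ)] at hsum
  have hnonpos : ((∑' j, π j * (M j / L j)).toReal - (∑' j, π j).toReal) / Real.log 2 ≤ 0 :=
    div_nonpos_of_nonpos_of_nonneg (sub_nonpos.mpr (ENNReal.toReal_mono hπ hratio))
      (Real.log_nonneg one_le_two)
  exact (ENNReal.toReal_le_toReal hLfin hMfin).mp (by linarith)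

lemma massEntropy_ne_top_of_summable {α : Type*} {m : α → ℝ≥0∞} (hm : ∀ x, m x ≤ 1)
    (h : Summable fun x => -((m x).toReal * Real.logb 2 (m x).toReal)) :
    massEntropy m ≠ ∞ := by
  have hterm (x : α) :
      m x * surprisal (m x) = ENNReal.ofReal (-((m x).toReal * Real.logb 2 (m x).toReal)) := by
    rw [← toReal_mul_surprisal (hm x), ENNReal.ofReal_toReal (ENNReal.mul_ne_top
      (ne_top_of_le_ne_top ENNReal.one_ne_top (hm x)) surprisal_ne_top)]
  rw [massEntropy, tsum_congr hterm, ← ENNReal.ofReal_tsum_of_nonneg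
    (fun x => by rw [← toReal_mul_surprisal (hm x)]; exact ENNReal.toReal_nonneg) h]
  exact ENNReal.ofReal_ne_top

lemma toReal_add_le_toReal_add {a b c d : ℝ≥0∞} (h : a + b ≤ c + d) (hc : c ≠ ∞) (hd : d ≠ ∞) :
    a.toReal + b.toReal ≤ c.toReal + d.toReal := by
  have hcd : c + d ≠ ∞ := ENNReal.add_ne_top.mpr ⟨hc, hd⟩
  have hab : a + b ≠ ∞ := ne_top_of_le_ne_top hcd h
  rw [← ENNReal.toReal_add (ENNReal.add_ne_top.mp hab).1 (ENNReal.add_ne_top.mp hab).2,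
    ← ENNReal.toReal_add hc hd]
  exact ENNReal.toReal_mono hcd h

lemma tsum_mul_tsum_ennreal {α β : Type*} (f : α → ℝ≥0∞) (g : β → ℝ≥0∞) :
    (∑' a, f a) * ∑' b, g b = ∑' t : α × β, f t.1 * g t.2 := by
  simp only [ENNReal.tsum_prod', ENNReal.tsum_mul_left, ENNReal.tsum_mul_right]

lemma massEntropy_prod {α β : Type*} {p : α → ℝ≥0∞} {q : β → ℝ≥0∞}
    (hp : ∑' a, p a = 1) (hq : ∑' b, q b = 1) :
    massEntropy (fun t : α × β => p t.1 * q t.2) = massEntropy p + massEntropy q := by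
  have hp1 : ∀ a, p a ≤ 1 := fun a => hp ▸ ENNReal.le_tsum a
  have hq1 : ∀ b, q b ≤ 1 := fun b => hq ▸ ENNReal.le_tsum b
  have pointwise : ∀ t : α × β, p t.1 * q t.2 * surprisal (p t.1 * q t.2)
      = p t.1 * surprisal (p t.1) * q t.2 + p t.1 * (q t.2 * surprisal (q t.2)) := fun t => by
    rcases eq_or_ne (p t.1) 0 with hp0 | hp0
    · simp [hp0]
    rcases eq_or_ne (q t.2) 0 with hq0 | hq0
    · simp [hq0]
    rw [surprisal_mul hp0 (hp1 _) hq0 (hq1 _)]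
    ring
  rw [massEntropy, tsum_congr pointwise, ENNReal.tsum_add,
    ← tsum_mul_tsum_ennreal (fun a => p a * surprisal (p a)) q,
    ← tsum_mul_tsum_ennreal p (fun b => q b * surprisal (q b)), hp, hq, mul_one, one_mul]
  rfl


section PushMass

variable {J α : Type*}

lemma tsum_eq_tsum_tsum_preimage (σ : J → α) (F : J → ℝ≥0∞) :
    ∑' j, F j = ∑' (s : α) (j : σ ⁻¹' {s}), F j := by
  rw [← (Equiv.sigmaPreimageEquiv σ).tsum_eq F, ENNReal.tsum_sigma']
  rfl

lemma tsum_pushMass (σ : J → α) (π : J → ℝ≥0∞) : ∑' s, pushMass σ π s = ∑' j, π j :=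
  (tsum_eq_tsum_tsum_preimage σ π).symm

lemma le_pushMass (σ : J → α) (π : J → ℝ≥0∞) (j : J) : π j ≤ pushMass σ π (σ j) :=
  ENNReal.le_tsum (⟨j, rfl⟩ : σ ⁻¹' {σ j})

lemma pushMass_le_one {σ : J → α} {π : J → ℝ≥0∞} (hπ : ∑' j, π j ≤ 1) (s : α) :
    pushMass σ π s ≤ 1 :=
  (ENNReal.le_tsum s).trans ((tsum_pushMass σ π).trans_le hπ)

lemma massEntropy_pushMass (σ : J → α) (π : J → ℝ≥0∞) :
    massEntropy (pushMass σ π) = ∑' j, π j * surprisal (pushMass σ π (σ j)) := by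
  rw [tsum_eq_tsum_tsum_preimage σ, massEntropy]
  refine tsum_congr fun s => ?_
  rw [pushMass, ← ENNReal.tsum_mul_right]
  refine tsum_congr fun j => ?_
  rw [show σ j = s from j.2]
  rfl

lemma massEntropy_pushMass_le (σ : J → α) (π : J → ℝ≥0∞) :
    massEntropy (pushMass σ π) ≤ massEntropy π := by
  rw [massEntropy_pushMass]
  refine ENNReal.tsum_le_tsum fun j => ?_
  rcases eq_or_ne (π j) 0 with h0 | h0
  · simp [h0]
  gcongr
  exact surprisal_antitone h0 (le_pushMass σ π j)

lemma massEntropy_add_massEntropy_pushMass {β : Type*} {π : J → ℝ≥0∞} (hπ : ∑' j, π j ≤ 1)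
    (σ : J → α) (τ : J → β) :
    massEntropy (pushMass σ π) + massEntropy (pushMass τ π)
      = ∑' j, π j * surprisal (pushMass σ π (σ j) * pushMass τ π (τ j)) := by
  rw [massEntropy_pushMass, massEntropy_pushMass, ← ENNReal.tsum_add]
  refine tsum_congr fun j => ?_
  rcases eq_or_ne (π j) 0 with h0 | h0
  · simp [h0]
  have hσ : pushMass σ π (σ j) ≠ 0 := (pos_of_ne_zero h0).trans_le (le_pushMass σ π j) |>.ne'
  have hτ : pushMass τ π (τ j) ≠ 0 := (pos_of_ne_zero h0).trans_le (le_pushMass τ π j) |>.ne'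
  rw [surprisal_mul hσ (pushMass_le_one hπ _) hτ (pushMass_le_one hπ _), mul_add]

end PushMass

section JointMass

variable {α β γ : Type*} {p : α → ℝ≥0∞} {q : β → ℝ≥0∞} {r : γ → ℝ≥0∞}

lemma tsum_jointMass (hp : ∑' a, p a = 1) (hq : ∑' b, q b = 1) (hr : ∑' c, r c = 1) :
    ∑' t, jointMass p q r t = 1 := by
  unfold jointMass
  rw [← tsum_mul_tsum_ennreal p fun t : β × γ => q t.1 * r t.2, ← tsum_mul_tsum_ennreal q r, hp, hq,
    hr, one_mul, one_mul]

lemma massEntropy_jointMass (hp : ∑' a, p a = 1) (hq : ∑' b, q b = 1) (hr : ∑' c, r c = 1) :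
    massEntropy (jointMass p q r) = massEntropy p + massEntropy q + massEntropy r := by
  have hqr : ∑' t : β × γ, q t.1 * r t.2 = 1 := by rw [← tsum_mul_tsum_ennreal, hq, hr, one_mul]
  unfold jointMass
  rw [massEntropy_prod hp hqr, massEntropy_prod hq hr, add_assoc]

lemma massEntropy_pushMass_jointMass_ne_top (hp : ∑' a, p a = 1) (hq : ∑' b, q b = 1)
    (hr : ∑' c, r c = 1) (hpE : massEntropy p ≠ ∞) (hqE : massEntropy q ≠ ∞)
    (hrE : massEntropy r ≠ ∞) {δ : Type*} (σ : α × β × γ → δ) :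
    massEntropy (pushMass σ (jointMass p q r)) ≠ ∞ := by
  refine ne_top_of_le_ne_top ?_ (massEntropy_pushMass_le σ _)
  rw [massEntropy_jointMass hp hq hr]
  exact ENNReal.add_ne_top.mpr ⟨ENNReal.add_ne_top.mpr ⟨hpE, hqE⟩, hrE⟩

lemma tsum_preimage_eq_tsum_prod {δ : Type*} (σ : α × β × γ → δ) (s : δ) (d : α × β → γ)
    (hd : ∀ a b c, σ (a, b, c) = s ↔ c = d (a, b)) (F : α × β × γ → ℝ≥0∞) :
    ∑' t : σ ⁻¹' {s}, F t = ∑' ab : α × β, F (ab.1, ab.2, d ab) := by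
  let e : α × β ≃ σ ⁻¹' {s} :=
    { toFun := fun ab => ⟨(ab.1, ab.2, d ab), (hd ab.1 ab.2 (d ab)).mpr rfl⟩
      invFun := fun t => (t.1.1, t.1.2.1)
      left_inv := fun _ => rfl
      right_inv := fun ⟨⟨a, b, c⟩, ht⟩ => Subtype.ext (by simp [(hd a b c).mp ht]) }
  exact (e.tsum_eq fun t => F t).symm

lemma pushMass_jointMass_thd (hp : ∑' a, p a = 1) (hq : ∑' b, q b = 1) :
    pushMass (fun t : α × β × γ => t.2.2) (jointMass p q r) = r := by
  ext c
  rw [pushMass, tsum_preimage_eq_tsum_prod _ c (fun _ => c) fun _ _ _ => Iff.rfl]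
  simp only [jointMass, ← mul_assoc]
  rw [ENNReal.tsum_mul_right, ← tsum_mul_tsum_ennreal, hp, hq, one_mul, one_mul]

end JointMass

section AddCommGroup

variable {G : Type*} [AddCommGroup G] {p q r : G → ℝ≥0∞}

lemma pushMass_jointMass_fst_add_thd (hq : ∑' b, q b = 1) (x : G) :
    pushMass (fun t : G × G × G => t.1 + t.2.2) (jointMass p q r) x = ∑' a, p a * r (x - a) := by
  rw [pushMass, tsum_preimage_eq_tsum_prod _ x (fun ab => x - ab.1)
    fun _ _ _ => eq_sub_iff_add_eq'.symm]
  calc ∑' ab : G × G, p ab.1 * (q ab.2 * r (x - ab.1))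
      = ∑' ab : G × G, p ab.1 * r (x - ab.1) * q ab.2 := tsum_congr fun _ => by ring
    _ = ∑' a, p a * r (x - a) := by
      rw [← tsum_mul_tsum_ennreal (fun a => p a * r (x - a)) q, hq, mul_one]

lemma pushMass_jointMass_snd_add_thd (hp : ∑' a, p a = 1) (x : G) :
    pushMass (fun t : G × G × G => t.2.1 + t.2.2) (jointMass p q r) x
      = ∑' b, q b * r (x - b) := by
  rw [pushMass, tsum_preimage_eq_tsum_prod _ x (fun ab => x - ab.2)
    fun _ _ _ => eq_sub_iff_add_eq'.symm]
  exact (tsum_mul_tsum_ennreal p fun b => q b * r (x - b)).symm.trans (by rw [hp, one_mul])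

lemma pushMass_jointMass_add_add (x : G) :
    pushMass (fun t : G × G × G => t.1 + t.2.1 + t.2.2) (jointMass p q r) x
      = ∑' ab : G × G, p ab.1 * (q ab.2 * r (x - ab.1 - ab.2)) := by
  rw [pushMass, tsum_preimage_eq_tsum_prod _ x (fun ab => x - ab.1 - ab.2)
    fun _ _ _ => by rw [sub_sub]; exact eq_sub_iff_add_eq'.symm]
  rfl

lemma pushMass_jointMass_add_add_eq_tsum_fst (hp : ∑' a, p a = 1) (s : G) :
    pushMass (fun t : G × G × G => t.1 + t.2.1 + t.2.2) (jointMass p q r) s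
      = ∑' a, p a * pushMass (fun t : G × G × G => t.2.1 + t.2.2) (jointMass p q r) (s - a) := by
  simp only [pushMass_jointMass_add_add, pushMass_jointMass_snd_add_thd hp, ENNReal.tsum_prod',
    ENNReal.tsum_mul_left, sub_sub]

lemma pushMass_jointMass_add_add_eq_tsum_snd (hq : ∑' b, q b = 1) (s : G) :
    pushMass (fun t : G × G × G => t.1 + t.2.1 + t.2.2) (jointMass p q r) s
      = ∑' b, q b * pushMass (fun t : G × G × G => t.1 + t.2.2) (jointMass p q r) (s - b) := by
  simp only [pushMass_jointMass_add_add, pushMass_jointMass_fst_add_thd hq, ENNReal.tsum_prod',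
    ← ENNReal.tsum_mul_left]
  rw [ENNReal.tsum_comm]
  exact tsum_congr fun b => tsum_congr fun a => by rw [sub_right_comm]; ring

lemma tsum_jointMass_mul_ratio_le {f g h : G → ℝ≥0∞} (hr : ∀ c, r c ≠ ∞)
    (hpg : ∀ s, h s = ∑' a, p a * g (s - a)) (hqf : ∀ s, h s = ∑' b, q b * f (s - b)) :
    ∑' t : G × G × G, jointMass p q r t
        * (f (t.1 + t.2.2) * g (t.2.1 + t.2.2) / (h (t.1 + t.2.1 + t.2.2) * r t.2.2))
      ≤ ∑' s, h s := by
  set K : G × G × G → ℝ≥0∞ := fun t => jointMass p q r t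
    * (f (t.1 + t.2.2) * g (t.2.1 + t.2.2) / (h (t.1 + t.2.1 + t.2.2) * r t.2.2))
  refine (tsum_eq_tsum_tsum_preimage (fun t : G × G × G => t.1 + t.2.1 + t.2.2) K).trans_le
    (ENNReal.tsum_le_tsum fun s => ?_)
  refine (tsum_preimage_eq_tsum_prod _ s (fun ab => s - ab.1 - ab.2)
    (fun _ _ _ => by rw [sub_sub]; exact eq_sub_iff_add_eq'.symm) K).trans_le ?_
  have pointwise (a b : G) :
      K (a, b, s - a - b) ≤ p a * g (s - a) * (q b * f (s - b)) * (h s)⁻¹ := by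
    show p a * (q b * r (s - a - b))
      * (f (a + (s - a - b)) * g (b + (s - a - b)) / (h (a + b + (s - a - b)) * r (s - a - b)))
      ≤ p a * g (s - a) * (q b * f (s - b)) * (h s)⁻¹
    rw [show a + (s - a - b) = s - b by abel, show b + (s - a - b) = s - a by abel,
      show a + b + (s - a - b) = s by abel]
    set c := s - a - b
    rcases eq_or_ne (r c) 0 with h0 | h0
    · simp [h0]
    calc p a * (q b * r c) * (f (s - b) * g (s - a) / (h s * r c))
        = p a * g (s - a) * (q b * f (s - b)) * (h s)⁻¹ * (r c * (r c)⁻¹) := by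
          rw [div_eq_mul_inv, ENNReal.mul_inv (Or.inr (hr c)) (Or.inr h0)]
          ring
      _ ≤ p a * g (s - a) * (q b * f (s - b)) * (h s)⁻¹ :=
          mul_le_of_le_one_right' (ENNReal.mul_inv_le_one _)
  calc _ ≤ ∑' ab : G × G, p ab.1 * g (s - ab.1) * (q ab.2 * f (s - ab.2)) * (h s)⁻¹ :=
        ENNReal.tsum_le_tsum fun ab => pointwise ab.1 ab.2
    _ = h s * (h s * (h s)⁻¹) := by
        rw [ENNReal.tsum_mul_right, ← tsum_mul_tsum_ennreal (fun a => p a * g (s - a))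
          fun b => q b * f (s - b), ← hpg, ← hqf, mul_assoc]
    _ ≤ h s := mul_le_of_le_one_right' (ENNReal.mul_inv_le_one _)

theorem massEntropy_add_add_add_massEntropy_le (hp : ∑' a, p a = 1) (hq : ∑' b, q b = 1)
    (hr : ∑' c, r c = 1)
    (hpE : massEntropy p ≠ ∞) (hqE : massEntropy q ≠ ∞) (hrE : massEntropy r ≠ ∞) :
    massEntropy (pushMass (fun t : G × G × G => t.1 + t.2.1 + t.2.2) (jointMass p q r))
        + massEntropy r
      ≤ massEntropy (pushMass (fun t : G × G × G => t.1 + t.2.2) (jointMass p q r))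
        + massEntropy (pushMass (fun t : G × G × G => t.2.1 + t.2.2) (jointMass p q r)) := by
  set π := jointMass p q r
  have hπ : ∑' t, π t = 1 := tsum_jointMass hp hq hr
  have entropy_ne_top (σ τ : G × G × G → G) :
      ∑' t, π t * surprisal (pushMass σ π (σ t) * pushMass τ π (τ t)) ≠ ∞ := by
    rw [← massEntropy_add_massEntropy_pushMass hπ.le]
    exact ENNReal.add_ne_top.mpr
      ⟨massEntropy_pushMass_jointMass_ne_top hp hq hr hpE hqE hrE σ,
        massEntropy_pushMass_jointMass_ne_top hp hq hr hpE hqE hrE τ⟩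
  have ne_zero (σ : G × G × G → G) {t} (ht : π t ≠ 0) : pushMass σ π (σ t) ≠ 0 :=
    (pos_of_ne_zero ht).trans_le (le_pushMass σ π t) |>.ne'
  have le_one (σ : G × G × G → G) (x : G) : pushMass σ π x ≤ 1 := pushMass_le_one hπ.le x
  have hthd : pushMass (fun t => t.2.2) π = r := pushMass_jointMass_thd hp hq
  rw [← hthd, massEntropy_add_massEntropy_pushMass hπ.le,
    massEntropy_add_massEntropy_pushMass hπ.le]
  refine tsum_mul_surprisal_le (hπ ▸ ENNReal.one_ne_top)
    (fun t ht => ⟨mul_ne_zero (ne_zero _ ht) (ne_zero _ ht), mul_le_one' (le_one _ _) (le_one _ _)⟩)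
    (fun t ht => ⟨mul_ne_zero (ne_zero _ ht) (ne_zero _ ht),
      ENNReal.mul_ne_top (ne_top_of_le_ne_top ENNReal.one_ne_top (le_one _ _))
        (ne_top_of_le_ne_top ENNReal.one_ne_top (le_one _ _))⟩)
    (entropy_ne_top _ _) (entropy_ne_top _ _) ?_
  rw [hthd, ← tsum_pushMass (fun t : G × G × G => t.1 + t.2.1 + t.2.2) π]
  exact tsum_jointMass_mul_ratio_le
    (fun c => ne_top_of_le_ne_top ENNReal.one_ne_top (hr ▸ ENNReal.le_tsum c))
    (pushMass_jointMass_add_add_eq_tsum_fst hp) (pushMass_jointMass_add_add_eq_tsum_snd hq)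

end AddCommGroup

section RandomVariable

variable {Ω β : Type*} [MeasurableSpace Ω] {μ : Measure Ω}

lemma support_mass_subset (X : Ω → β) : Function.support (mass μ X) ⊆ Set.range X := by
  intro x hx
  by_contra h
  exact hx (by simp [mass, Set.preimage_singleton_eq_empty.mpr h])

variable [MeasurableSpace β] [MeasurableSingletonClass β] {W : Ω → β}

lemma tsum_mass (hW : Measurable W) (hc : (Set.range W).Countable) :
    ∑' x, mass μ W x = μ Set.univ := by
  rw [← tsum_subtype_eq_of_support_subset (support_mass_subset W), ← Set.preimage_range W]
  exact tsum_measure_preimage_singleton hc fun y _ => hW (measurableSet_singleton y)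

lemma mass_comp {γ : Type*} (hW : Measurable W) (hc : (Set.range W).Countable) (φ : β → γ) :
    mass μ (φ ∘ W) = pushMass φ (mass μ W) := by
  ext s
  have hcount : (φ ⁻¹' {s} ∩ Set.range W).Countable := hc.mono Set.inter_subset_right
  calc mass μ (φ ∘ W) s = ∑' b : ↥(φ ⁻¹' {s} ∩ Set.range W), mass μ W b := by
        rw [mass, Set.preimage_comp, ← Set.preimage_inter_range]
        exact (tsum_measure_preimage_singleton hcount fun y _ =>
          hW (measurableSet_singleton y)).symm
    _ = pushMass φ (mass μ W) s := by
        rw [pushMass, tsum_subtype, tsum_subtype, ← Set.indicator_inter_support, Set.inter_assoc,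
          Set.inter_eq_right.mpr (support_mass_subset W), Set.indicator_inter_support]

lemma mass_prodMk_of_iIndepFun {V₁ V₂ V₃ : Ω → β} (hind : iIndepFun ![V₁, V₂, V₃] μ) :
    mass μ (fun ω => (V₁ ω, V₂ ω, V₃ ω)) = jointMass (mass μ V₁) (mass μ V₂) (mass μ V₃) := by
  ext ⟨a, b, c⟩
  have h := hind.measure_inter_preimage_eq_mul Finset.univ (sets := ![{a}, {b}, {c}])
    fun i _ => by fin_cases i <;> exact measurableSet_singleton _
  have hset : (fun ω => (V₁ ω, V₂ ω, V₃ ω)) ⁻¹' {(a, b, c)}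
      = ⋂ i, ![V₁, V₂, V₃] i ⁻¹' ![{a}, {b}, {c}] i := by
    ext ω
    simp [Fin.forall_fin_succ]
  simp only [Finset.mem_univ, Set.iInter_true, Fin.prod_univ_three] at h
  rw [mass, hset, h]
  simp [jointMass, mass, mul_assoc]



lemma ent_eq_toReal_massEntropy [IsProbabilityMeasure μ] (X : Ω → ℝ) :
    ent μ X = (massEntropy (mass μ X)).toReal := by
  have hfin (x : ℝ) : mass μ X x * surprisal (mass μ X x) ≠ ∞ :=
    ENNReal.mul_ne_top (measure_ne_top μ _) surprisal_ne_top
  rw [massEntropy, ENNReal.tsum_toReal_eq hfin]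
  exact tsum_congr fun x => (toReal_mul_surprisal prob_le_one).symm

lemma massEntropy_mass_ne_top [IsProbabilityMeasure μ] {X : Ω → ℝ} (hX : DiscreteFinEnt μ X) :
    massEntropy (mass μ X) ≠ ∞ :=
  massEntropy_ne_top_of_summable (fun _ => prob_le_one) hX.2.2

lemma tsum_mass_eq_one [IsProbabilityMeasure μ] {X : Ω → ℝ} (hX : DiscreteFinEnt μ X) :
    ∑' x, mass μ X x = 1 := by
  rw [tsum_mass hX.1 hX.2.1, measure_univ]

theorem ent_add_add_add_ent_le [IsProbabilityMeasure μ] {V₁ V₂ V₃ : Ω → ℝ}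
    (h₁ : DiscreteFinEnt μ V₁) (h₂ : DiscreteFinEnt μ V₂) (h₃ : DiscreteFinEnt μ V₃)
    (hind : iIndepFun ![V₁, V₂, V₃] μ) :
    ent μ (fun ω => V₁ ω + V₂ ω + V₃ ω) + ent μ V₃
      ≤ ent μ (fun ω => V₁ ω + V₃ ω) + ent μ (fun ω => V₂ ω + V₃ ω) := by
  set W : Ω → ℝ × ℝ × ℝ := fun ω => (V₁ ω, V₂ ω, V₃ ω)
  have hW : Measurable W := h₁.1.prodMk (h₂.1.prodMk h₃.1)
  have hc : (Set.range W).Countable := by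
    refine (h₁.2.1.prod (h₂.2.1.prod h₃.2.1)).mono (Set.range_subset_iff.mpr fun ω => ?_)
    exact ⟨⟨ω, rfl⟩, ⟨ω, rfl⟩, ⟨ω, rfl⟩⟩
  set π := jointMass (mass μ V₁) (mass μ V₂) (mass μ V₃)
  have hmass (σ : ℝ × ℝ × ℝ → ℝ) : mass μ (σ ∘ W) = pushMass σ π := by
    rw [mass_comp hW hc, mass_prodMk_of_iIndepFun hind]
  have h₁₂₃ : mass μ (fun ω => V₁ ω + V₂ ω + V₃ ω)
      = pushMass (fun t : ℝ × ℝ × ℝ => t.1 + t.2.1 + t.2.2) π :=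
    hmass fun t => t.1 + t.2.1 + t.2.2
  have h₁₃ : mass μ (fun ω => V₁ ω + V₃ ω) = pushMass (fun t : ℝ × ℝ × ℝ => t.1 + t.2.2) π :=
    hmass fun t => t.1 + t.2.2
  have h₂₃ : mass μ (fun ω => V₂ ω + V₃ ω) = pushMass (fun t : ℝ × ℝ × ℝ => t.2.1 + t.2.2) π :=
    hmass fun t => t.2.1 + t.2.2
  have hp := tsum_mass_eq_one h₁
  have hq := tsum_mass_eq_one h₂
  have hr := tsum_mass_eq_one h₃
  have hpE := massEntropy_mass_ne_top h₁
  have hqE := massEntropy_mass_ne_top h₂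
  have hrE := massEntropy_mass_ne_top h₃
  simp only [ent_eq_toReal_massEntropy, h₁₂₃, h₁₃, h₂₃]
  exact toReal_add_le_toReal_add (massEntropy_add_add_add_massEntropy_le hp hq hr hpE hqE hrE)
    (massEntropy_pushMass_jointMass_ne_top hp hq hr hpE hqE hrE _)
    (massEntropy_pushMass_jointMass_ne_top hp hq hr hpE hqE hrE _)

end RandomVariable

end DiscreteEntropy

open DiscreteEntropy in
theorem stmt13 (C : ℝ) (hC : 0 < C) :
    ∃ C' : ℝ, 0 < C' ∧
      ∀ {Ω : Type} [MeasurableSpace Ω] (μ : Measure Ω) [IsProbabilityMeasure μ]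
        (V₁ V₂ V₃ : Ω → ℝ) (ε : ℝ),
        DiscreteFinEnt μ V₁ → DiscreteFinEnt μ V₂ → DiscreteFinEnt μ V₃ →
        iIndepFun ![V₁, V₂, V₃] μ →
        0 < ent μ V₁ → 0 < ent μ V₂ → 0 < ent μ V₃ →
        ε ∈ Set.Ioo (0 : ℝ) (1 / 2) →
        ent μ (fun ω => V₂ ω + V₃ ω) ≤ (1 + C * ε) * ent μ V₁ →
        ent μ (fun ω => V₁ ω + V₃ ω) ≤ (1 + C * ε) * ent μ V₁ →
        (1 - C * ε) * ent μ V₁ ≤ ent μ V₃ →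
        ent μ V₃ ≤ (1 + C * ε) * ent μ V₁ →
        ent μ (fun ω => V₁ ω + V₂ ω + V₃ ω) ≤ (1 + C' * ε) * ent μ V₁ := by
  refine ⟨3 * C, by positivity, ?_⟩
  intro Ω _ μ _ V₁ V₂ V₃ ε h₁ h₂ h₃ hind _ _ _ _ h₂₃ h₁₃ h₃_lower _
  have submodular := ent_add_add_add_ent_le h₁ h₂ h₃ hind
  linarith
end
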